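/- arXiv:2402.10293 — 3 statements merged into one kernel-verified Lean document; each statement's English description precedes it below -/
import Mathlib

section
/- Define functions qA, qE : ℕ → ℕ by qA(1) = 1, qE(1) = 2, qA(2) = 2, qE(2) = 2, qE(ℓ) = qA(⌈ℓ/2⌉) + 1 for ℓ ≥ 2, and qA(ℓ) = qE(⌊ℓ/2⌋) + 1 for ℓ ≥ 3. Then for all ℓ ≥ 3, qA(ℓ) = 2 + qA(⌊(ℓ+2)/4⌋). -/
theorem stmt_1_general (qA qE : ℕ → ℕ)
    (hA1 : qA 1 = 1) (hE1 : qE 1 = 2)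
    (hE : ∀ ℓ, 2 ≤ ℓ → qE ℓ = qA ((ℓ + 1) / 2) + 1)
    (hA : ∀ ℓ, 3 ≤ ℓ → qA ℓ = qE (ℓ / 2) + 1) :
    ∀ ℓ, 3 ≤ ℓ → qA ℓ = 2 + qA ((ℓ + 2) / 4) := by
  intro ℓ hℓ
  rw [hA ℓ hℓ]
  obtain rfl | h4 := hℓ.eq_or_lt
  · simp [hE1, hA1]
  · have ceil_half_floor_half : (ℓ / 2 + 1) / 2 = (ℓ + 2) / 4 := by omega
    rw [hE (ℓ / 2) (by omega), ceil_half_floor_half]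
    omega

theorem stmt_1 (qA qE : ℕ → ℕ)
    (hA1 : qA 1 = 1) (hE1 : qE 1 = 2) (hA2 : qA 2 = 2) (hE2 : qE 2 = 2)
    (hE : ∀ ℓ, 2 ≤ ℓ → qE ℓ = qA ((ℓ + 1) / 2) + 1)
    (hA : ∀ ℓ, 3 ≤ ℓ → qA ℓ = qE (ℓ / 2) + 1) :
    ∀ ℓ, 3 ≤ ℓ → qA ℓ = 2 + qA ((ℓ + 2) / 4) :=
  stmt_1_general qA qE hA1 hE1 hE hA
end

section
/- Define qA, qE : ℕ → ℕ by qA(1)=1, qE(1)=2, qA(2)=2, qE(2)=2, qE(ℓ)=qA(⌈ℓ/2⌉)+1 for ℓ≥2, qA(ℓ)=qE(⌊ℓ/2⌋)+1 for ℓ≥3, and let q(ℓ) = min(qA(ℓ), qE(ℓ)) and r(ℓ) = 1 + ⌊log₂ ℓ⌋. Then for all ℓ ≥ 1, q(ℓ) ≤ r(ℓ) + 1. -/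
theorem stmt_6 (qA qE : ℕ → ℕ)
    (hA1 : qA 1 = 1) (hE1 : qE 1 = 2) (hA2 : qA 2 = 2) (hE2 : qE 2 = 2)
    (hE : ∀ ℓ, 2 ≤ ℓ → qE ℓ = qA ((ℓ + 1) / 2) + 1)
    (hA : ∀ ℓ, 3 ≤ ℓ → qA ℓ = qE (ℓ / 2) + 1)
    (q r : ℕ → ℕ)
    (hq : ∀ ℓ, q ℓ = min (qA ℓ) (qE ℓ))
    (hr : ∀ ℓ, r ℓ = 1 + Nat.log 2 ℓ) :
    ∀ ℓ, 1 ≤ ℓ → q ℓ ≤ r ℓ + 1 := by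
  have key : ∀ k, qA (2 ^ k) ≤ k + 1 := by
    intro k
    induction k using Nat.strong_induction_on with
    | _ k ih =>
      match k with
      | 0 => simpa using hA1.le
      | 1 => simpa using hA2.le
      | (j+2) =>
        have hp : (0:ℕ) < 2 ^ j := Nat.pow_pos (n := j) (by norm_num)
        have e1 : (2:ℕ) ^ (j+2) = 4 * 2 ^ j := by ring
        have e2 : (2:ℕ) ^ (j+1) = 2 * 2 ^ j := by ring
        have h1 : qA (2 ^ (j+2)) = qE (2 ^ (j+1)) + 1 := by
          rw [hA _ (by omega)]
          congr 2
          omega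
        have h2 : qE (2 ^ (j+1)) = qA (2 ^ j) + 1 := by
          rw [hE _ (by omega)]
          congr 2
          omega
        have := ih j (by omega)
        omega
  have main : ∀ ℓ, 1 ≤ ℓ → qA ℓ ≤ Nat.log 2 ℓ + 2 ∧ qE ℓ ≤ Nat.log 2 ℓ + 2 := by
    intro ℓ
    induction ℓ using Nat.strong_induction_on with
    | _ ℓ ih =>
      intro hℓ
      match ℓ, hℓ with
      | 1, _ => constructor <;> simp [hA1, hE1]
      | 2, _ => constructor <;> simp [hA2, hE2]
      | (n+3), _ =>
        have hℓ3 : 3 ≤ n + 3 := by omega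
        have hk : 0 < Nat.log 2 (n+3) := Nat.log_pos (by norm_num) (by omega)
        constructor
        · rw [hA _ hℓ3]
          have h2 : 1 ≤ (n+3)/2 := by omega
          have hih := (ih ((n+3)/2) (by omega) h2).2
          have hlog : Nat.log 2 ((n+3)/2) = Nat.log 2 (n+3) - 1 :=
            Nat.log_div_base 2 (n+3)
          omega
        · rw [hE _ (by omega)]
          set m := (n+3+1)/2 with hm
          have hm1 : 2 ≤ m := by omega
          have hmlt : m < n+3 := by omega
          by_cases hc : m < 2 ^ Nat.log 2 (n+3)
          · have hlogm : Nat.log 2 m < Nat.log 2 (n+3) :=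
              Nat.log_lt_of_lt_pow (by omega) hc
            have hih := (ih m (by omega) (by omega)).1
            omega
          · have hub : n+3 < 2 ^ (Nat.log 2 (n+3) + 1) :=
              Nat.lt_pow_succ_log_self (by norm_num) _
            have e2 : (2:ℕ) ^ (Nat.log 2 (n+3) + 1) = 2 * 2 ^ Nat.log 2 (n+3) := by
              ring
            have hmeq : m = 2 ^ Nat.log 2 (n+3) := by omega
            have := key (Nat.log 2 (n+3))
            rw [hmeq]
            omega
  intro ℓ hℓ
  have := (main ℓ hℓ).1
  rw [hq, hr]
  calc min (qA ℓ) (qE ℓ) ≤ qA ℓ := min_le_left _ _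
    _ ≤ 1 + Nat.log 2 ℓ + 1 := by omega
end

section
/- Let t ≥ 2 be an integer and let f be a natural number with f ≥ t^(⌈e·t⌉). Set m = ⌈log_t f⌉. Then m! ≥ f. -/
theorem stmt_8 (t : ℕ) (ht : 2 ≤ t) (f : ℕ)
    (hf : t ^ ⌈Real.exp 1 * t⌉₊ ≤ f) :
    f ≤ Nat.factorial ⌈Real.logb t f⌉₊ := by
  set c : ℕ := ⌈Real.exp 1 * t⌉₊ with hc
  set m : ℕ := ⌈Real.logb t f⌉₊ with hm
  have ht1 : (1 : ℝ) < t := by exact_mod_cast lt_of_lt_of_le one_lt_two ht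
  have ht0 : (0 : ℝ) < t := lt_trans one_pos ht1
  have het : (0 : ℝ) < Real.exp 1 * t := by positivity
  have hc1 : 1 ≤ c := Nat.one_le_ceil_iff.mpr het
  have hfpos : 0 < f := lt_of_lt_of_le (pow_pos (by omega) c) hf
  have hfR : (0 : ℝ) < f := by exact_mod_cast hfpos
  -- c ≤ logb t f
  have hcf : (c : ℝ) ≤ Real.logb t f := by
    have : ((t : ℝ) ^ c) ≤ (f : ℝ) := by exact_mod_cast hf
    calc (c : ℝ) = Real.logb t ((t : ℝ) ^ c) := by
          rw [Real.logb_pow, Real.logb_self_eq_one ht1, mul_one]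
      _ ≤ Real.logb t f := Real.logb_le_logb_of_le ht1 (by positivity) this
  have hcm : c ≤ m := by
    calc c = ⌈(c : ℝ)⌉₊ := (Nat.ceil_natCast c).symm
      _ ≤ m := Nat.ceil_le_ceil hcf
  -- e * t ≤ m
  have hetm : Real.exp 1 * t ≤ m := by
    have h1 : Real.exp 1 * t ≤ (c : ℝ) := Nat.le_ceil _
    have h2 : (c : ℝ) ≤ (m : ℝ) := by exact_mod_cast hcm
    linarith
  -- f ≤ t ^ m
  have hftm : (f : ℝ) ≤ (t : ℝ) ^ m := by
    have hlog : Real.logb t f ≤ (m : ℝ) := Nat.le_ceil _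
    have : (f : ℝ) = (t : ℝ) ^ (Real.logb t f) := (Real.rpow_logb ht0 (ne_of_gt ht1) hfR).symm
    rw [this]
    calc (t : ℝ) ^ (Real.logb t f) ≤ (t : ℝ) ^ (m : ℝ) :=
          Real.rpow_le_rpow_of_exponent_le ht1.le hlog
      _ = (t : ℝ) ^ m := Real.rpow_natCast _ _
  -- t ^ m ≤ m !
  have hkey : (t : ℝ) ^ m ≤ (Nat.factorial m : ℝ) := by
    have hmm : ((m : ℝ)) ^ m / (Nat.factorial m : ℝ) ≤ Real.exp m :=
      Real.pow_div_factorial_le_exp (x := (m:ℝ)) (by positivity) m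
    have hfacpos : (0 : ℝ) < (Nat.factorial m : ℝ) := by exact_mod_cast m.factorial_pos
    have hmm' : ((m : ℝ)) ^ m ≤ (Nat.factorial m : ℝ) * Real.exp m := by
      rw [div_le_iff₀ hfacpos] at hmm
      linarith [hmm]
    have hexp : Real.exp (m : ℝ) = (Real.exp 1) ^ m := by
      rw [← Real.exp_nat_mul]; ring_nf
    have hte : (t : ℝ) * Real.exp 1 ≤ (m : ℝ) := by
      rw [mul_comm]; exact hetm
    have h3 : ((t : ℝ) * Real.exp 1) ^ m ≤ (m : ℝ) ^ m :=
      pow_le_pow_left₀ (by positivity) hte m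
    rw [mul_pow] at h3
    have hepos : (0 : ℝ) < (Real.exp 1) ^ m := by positivity
    have : (t : ℝ) ^ m * (Real.exp 1) ^ m ≤ (Nat.factorial m : ℝ) * (Real.exp 1) ^ m := by
      calc (t : ℝ) ^ m * (Real.exp 1) ^ m ≤ (m : ℝ) ^ m := h3
        _ ≤ (Nat.factorial m : ℝ) * Real.exp m := hmm'
        _ = (Nat.factorial m : ℝ) * (Real.exp 1) ^ m := by rw [hexp]
    exact le_of_mul_le_mul_right this hepos
  have : (f : ℝ) ≤ (Nat.factorial m : ℝ) := le_trans hftm hkey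
  exact_mod_cast this
end
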